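/- arXiv:1610.04938 — 6 statements merged into one kernel-verified Lean document; each statement's English description precedes it below -/
import Mathlib

section
/- Let 0 < γ < 1 and 0 < lα with lα + γ > 1 and lα + γ < 2 (where l is a positive integer and 0 < α ≤ 1). Then for all 0 < x < y, (x^(γ-1) - y^(γ-1)) · x^(lα) ≤ (y - x)^(lα + γ - 1). -/
open Real

theorem stmt0 (γ α : ℝ) (l : ℕ) (hγ0 : 0 < γ) (hγ1 : γ < 1)
    (hl : 1 ≤ l) (hα0 : 0 < α) (hα1 : α ≤ 1)
    (h1 : 1 < (l : ℝ) * α + γ) (h2 : (l : ℝ) * α + γ < 2) :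
    ∀ x y : ℝ, 0 < x → x < y →
      (x ^ (γ - 1) - y ^ (γ - 1)) * x ^ ((l : ℝ) * α) ≤
        (y - x) ^ ((l : ℝ) * α + γ - 1) := by
  intro x y hx hxy
  set a : ℝ := (l : ℝ) * α with ha
  have hy : (0:ℝ) < y := hx.trans hxy
  have hyx : 0 < y - x := sub_pos.2 hxy
  rcases le_total x (y - x) with h | h
  · have hb : x ^ (γ - 1) - y ^ (γ - 1) ≤ x ^ (γ - 1) := by
      have := rpow_nonneg hy.le (γ - 1)
      linarith
    calc (x ^ (γ - 1) - y ^ (γ - 1)) * x ^ a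
        ≤ x ^ (γ - 1) * x ^ a :=
          mul_le_mul_of_nonneg_right hb (rpow_nonneg hx.le _)
      _ = x ^ (a + γ - 1) := by rw [← rpow_add hx]; ring_nf
      _ ≤ (y - x) ^ (a + γ - 1) := rpow_le_rpow hx.le h (by linarith)
  · -- MVT case
    obtain ⟨c, hc, hdc⟩ := exists_hasDerivAt_eq_slope (fun t : ℝ => t ^ (γ - 1))
      (fun t : ℝ => (γ - 1) * t ^ (γ - 1 - 1)) hxy
      (by
        apply ContinuousOn.rpow_const continuousOn_id
        intro t ht
        exact Or.inl (ne_of_gt (lt_of_lt_of_le hx ht.1)))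
      (by
        intro t ht
        exact Real.hasDerivAt_rpow_const (Or.inl (ne_of_gt (hx.trans ht.1))))
    have hcx : x < c := hc.1
    have hcpos : 0 < c := hx.trans hcx
    have key : x ^ (γ - 1) - y ^ (γ - 1) = (1 - γ) * c ^ (γ - 2) * (y - x) := by
      have := hdc
      have h' : (γ - 1) * c ^ (γ - 1 - 1) * (y - x) = y ^ (γ - 1) - x ^ (γ - 1) := by
        rw [this]; field_simp
      have : γ - 1 - 1 = γ - 2 := by ring
      rw [this] at h'
      nlinarith [h']
    have hcb : c ^ (γ - 2) ≤ x ^ (γ - 2) :=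
      rpow_le_rpow_of_nonpos hx hcx.le (by linarith)
    have step1 : x ^ (γ - 1) - y ^ (γ - 1) ≤ x ^ (γ - 2) * (y - x) := by
      rw [key]
      have hcnn : 0 ≤ c ^ (γ - 2) := rpow_nonneg hcpos.le _
      have hb : (1 - γ) * c ^ (γ - 2) ≤ x ^ (γ - 2) := by nlinarith
      exact mul_le_mul_of_nonneg_right hb hyx.le
    calc (x ^ (γ - 1) - y ^ (γ - 1)) * x ^ a
        ≤ x ^ (γ - 2) * (y - x) * x ^ a := by
          apply mul_le_mul_of_nonneg_right step1 (rpow_nonneg hx.le _)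
      _ = x ^ (a + γ - 2) * (y - x) := by
          rw [mul_right_comm, ← rpow_add hx]; ring_nf
      _ ≤ (y - x) ^ (a + γ - 2) * (y - x) := by
          apply mul_le_mul_of_nonneg_right _ hyx.le
          exact rpow_le_rpow_of_nonpos hyx h (by linarith)
      _ = (y - x) ^ (a + γ - 1) := by
          rw [← Real.rpow_add_one (ne_of_gt hyx)]; ring_nf
end

section
/- Let 0 < γ < 1, l ∈ ℕ with l ≥ 1, 0 < α ≤ 1, lα ≤ 1 < (l+1)α, and lα + γ > 1. Then for all 0 < x < y, y^(γ-1) (y-x)^(lα) + (x^(γ-1) - y^(γ-1)) x^(lα) ≤ 2 (y-x)^(lα+γ-1). -/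
/-!
Write `d = y - x` and `p = lα`. Since `d ≤ y` and `γ - 1 ≤ 0`, the first term is at most
`d^(γ-1) d^p`. For the second, if `x ≤ d` drop `y^(γ-1)` and use `x^(p+γ-1) ≤ d^(p+γ-1)`;
if `d < x` use `x^(γ-1) - y^(γ-1) ≤ x^(γ-2) d` (from `x/y ≤ (x/y)^(1-γ)`, as `γ ≥ 0`)
together with `x^(p+γ-2) ≤ d^(p+γ-2)`, valid because `p + γ - 2 ≤ 0`.
-/

open Real

lemma rpow_sub_one_sub_rpow_sub_one_le {γ x y : ℝ} (hγ : 0 ≤ γ) (hx : 0 < x) (hxy : x ≤ y) :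
    x ^ (γ - 1) - y ^ (γ - 1) ≤ x ^ (γ - 2) * (y - x) := by
  have hy : 0 < y := hx.trans_le hxy
  have hratio : x / y ≤ (x / y) ^ (1 - γ) :=
    self_le_rpow_of_le_one (by positivity) (div_le_one_of_le₀ hxy hy.le) (by linarith)
  have hy_eq : y ^ (γ - 1) = x ^ (γ - 1) * (x / y) ^ (1 - γ) := by
    rw [div_rpow hx.le hy.le, mul_div_assoc', ← rpow_add hx, show γ - 1 = -(1 - γ) by ring,
      rpow_neg hy.le, neg_add_cancel, rpow_zero, one_div]
  calc x ^ (γ - 1) - y ^ (γ - 1) = x ^ (γ - 1) * (1 - (x / y) ^ (1 - γ)) := by rw [hy_eq]; ring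
    _ ≤ x ^ (γ - 1) * (1 - x / y) := by gcongr
    _ = x ^ (γ - 1) * (y - x) / y := by field_simp
    _ ≤ x ^ (γ - 1) * (y - x) / x := by gcongr
    _ = x ^ (γ - 2) * (y - x) := by
      rw [show γ - 2 = γ - 1 - 1 by ring, rpow_sub_one hx.ne' (γ - 1)]; ring

lemma rpow_sub_one_mul_rpow_le {γ p d y : ℝ} (hγ : γ ≤ 1) (hd : 0 < d) (hdy : d ≤ y) :
    y ^ (γ - 1) * d ^ p ≤ d ^ (p + γ - 1) :=
  calc y ^ (γ - 1) * d ^ p ≤ d ^ (γ - 1) * d ^ p := by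
        gcongr ?_ * _
        exact rpow_le_rpow_of_nonpos hd hdy (by linarith)
    _ = d ^ (p + γ - 1) := by rw [← rpow_add hd]; ring_nf

lemma rpow_sub_one_sub_mul_rpow_le {γ p x y : ℝ} (hγ : γ ≤ 1) (hp : p ≤ 1) (hpγ : 1 ≤ p + γ)
    (hx : 0 < x) (hxy : x < y) :
    (x ^ (γ - 1) - y ^ (γ - 1)) * x ^ p ≤ (y - x) ^ (p + γ - 1) := by
  have hd : 0 < y - x := sub_pos.mpr hxy
  rcases le_or_gt x (y - x) with hx_le | hx_gt
  · calc (x ^ (γ - 1) - y ^ (γ - 1)) * x ^ p ≤ x ^ (γ - 1) * x ^ p := by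
          gcongr
          exact sub_le_self _ (rpow_nonneg (hx.trans hxy).le _)
      _ = x ^ (p + γ - 1) := by rw [← rpow_add hx]; ring_nf
      _ ≤ (y - x) ^ (p + γ - 1) := rpow_le_rpow hx.le hx_le (by linarith)
  · calc (x ^ (γ - 1) - y ^ (γ - 1)) * x ^ p ≤ x ^ (γ - 2) * (y - x) * x ^ p := by
          gcongr
          exact rpow_sub_one_sub_rpow_sub_one_le (by linarith) hx hxy.le
      _ = x ^ (p + γ - 2) * (y - x) := by
          rw [show p + γ - 2 = γ - 2 + p by ring, rpow_add hx]; ring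
      _ ≤ (y - x) ^ (p + γ - 2) * (y - x) := by
          gcongr ?_ * _
          exact rpow_le_rpow_of_nonpos hd hx_gt.le (by linarith)
      _ = (y - x) ^ (p + γ - 1) := by
          rw [show p + γ - 1 = p + γ - 2 + 1 by ring, rpow_add_one hd.ne']

theorem stmt1_general (γ α : ℝ) (l : ℕ) (hγ1 : γ < 1)
    (hlα : (l : ℝ) * α ≤ 1)
    (h1 : 1 < (l : ℝ) * α + γ) :
    ∀ x y : ℝ, 0 < x → x < y →
      y ^ (γ - 1) * (y - x) ^ ((l : ℝ) * α) +
        (x ^ (γ - 1) - y ^ (γ - 1)) * x ^ ((l : ℝ) * α) ≤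
        2 * (y - x) ^ ((l : ℝ) * α + γ - 1) := by
  intro x y hx hxy
  rw [two_mul]
  gcongr
  · exact rpow_sub_one_mul_rpow_le hγ1.le (sub_pos.mpr hxy) (by linarith)
  · exact rpow_sub_one_sub_mul_rpow_le hγ1.le hlα h1.le hx hxy

theorem stmt1 (γ α : ℝ) (l : ℕ) (hγ0 : 0 < γ) (hγ1 : γ < 1)
    (hl : 1 ≤ l) (hα0 : 0 < α) (hα1 : α ≤ 1)
    (hlα : (l : ℝ) * α ≤ 1) (hlα' : 1 < ((l : ℝ) + 1) * α)
    (h1 : 1 < (l : ℝ) * α + γ) :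
    ∀ x y : ℝ, 0 < x → x < y →
      y ^ (γ - 1) * (y - x) ^ ((l : ℝ) * α) +
        (x ^ (γ - 1) - y ^ (γ - 1)) * x ^ ((l : ℝ) * α) ≤
        2 * (y - x) ^ ((l : ℝ) * α + γ - 1) :=
  stmt1_general γ α l hγ1 hlα h1
end

section
/- Let h > 0, γ > 0, and k a positive integer. Suppose g : [0,h] → ℝ is k times continuously differentiable with g^(j)(0) = 0 for all 0 ≤ j ≤ k. Define w(x) := g(x) x^(γ-1) for 0 < x ≤ h and w(0) := 0. Then w is (k-1) times continuously differentiable on [0,h], and there is a constant C depending only on h, k, γ such that the C^{k-1}[0,h] norm of w is at most C times the sup norm of g^(k) on [0,h]. -/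
/-!
Since `g` and its first `k - 1` derivatives vanish at `0`, Taylor's theorem gives
`|g⁽ⁱ⁾ x| ≤ M x^(k-i)`. On `(0, h]` the weight `x^(γ-1)` is smooth, and Leibniz' rule turns these
bounds into `|w⁽ᵐ⁾ x| ≤ C M x^(k-1-m+γ)`. The spare factor `x^γ` makes every `w⁽ᵐ⁾` with
`m < k - 1` differentiable at `0` with derivative `0`, and `w⁽ᵏ⁻¹⁾` continuous there, so `w`
is `C^(k-1)` on the closed interval with the same bounds.
-/

open Real Set Filter Topology

section DerivativeChain

variable {𝕜 E : Type*} [NontriviallyNormedField 𝕜] [NormedAddCommGroup E] [NormedSpace 𝕜 E]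
  {s : Set 𝕜} {n : ℕ} {F : ℕ → 𝕜 → E}

theorem eqOn_iteratedDerivWithin_of_hasDerivWithinAt (hs : UniqueDiffOn 𝕜 s)
    (hF : ∀ m < n, ∀ x ∈ s, HasDerivWithinAt (F m) (F (m + 1) x) s x) :
    ∀ m ≤ n, EqOn (iteratedDerivWithin m (F 0) s) (F m) s := by
  intro m
  induction m with
  | zero => intro _ x _; rfl
  | succ m ih =>
    intro hm x hx
    rw [iteratedDerivWithin_succ, derivWithin_congr (ih (by omega)) (ih (by omega) hx)]
    exact (hF m hm x hx).derivWithin (hs x hx)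

theorem contDiffOn_of_hasDerivWithinAt_of_continuousOn (hs : UniqueDiffOn 𝕜 s)
    (hF : ∀ m < n, ∀ x ∈ s, HasDerivWithinAt (F m) (F (m + 1) x) s x)
    (hcont : ContinuousOn (F n) s) : ContDiffOn 𝕜 n (F 0) s := by
  have heq := eqOn_iteratedDerivWithin_of_hasDerivWithinAt hs hF
  refine (contDiffOn_nat_iff_continuousOn_differentiableOn_deriv hs).2
    ⟨fun m hm => ?_, fun m hm => ?_⟩
  · refine ContinuousOn.congr ?_ (heq m hm)
    rcases hm.lt_or_eq with hm | rfl
    · exact fun x hx => (hF m hm x hx).continuousWithinAt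
    · exact hcont
  · exact fun x hx => (hF m hm x hx).differentiableWithinAt.congr (heq m hm.le) (heq m hm.le hx)

end DerivativeChain

theorem Ioc_mem_nhdsWithin_Icc_of_lt {a b x : ℝ} (hx : a < x) : Ioc a b ∈ 𝓝[Icc a b] x :=
  mem_nhdsWithin.2 ⟨Ioi a, isOpen_Ioi, hx, fun _ hy => ⟨hy.1, hy.2.2⟩⟩

theorem iteratedDerivWithin_Ioc_eq_Icc {E : Type*} [NormedAddCommGroup E] [NormedSpace ℝ E]
    {f : ℝ → E} {a b x : ℝ} (hx : a < x) (n : ℕ) :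
    iteratedDerivWithin n f (Ioc a b) x = iteratedDerivWithin n f (Icc a b) x := by
  simp only [iteratedDerivWithin_eq_iteratedFDerivWithin]
  rw [iteratedFDerivWithin_congr_set ?_ n]
  filter_upwards [lt_mem_nhds hx] with y hy
  exact propext ⟨fun hy' => ⟨hy.le, hy'.2⟩, fun hy' => ⟨hy, hy'.2⟩⟩

section VanishingAtZero

variable {f : ℝ → ℝ} {h K p : ℝ}

theorem tendsto_nhdsWithin_zero_of_abs_le_rpow {s : Set ℝ} (hp : 0 < p)
    (hf : ∀ y ∈ s, |f y| ≤ K * y ^ p) : Tendsto f (𝓝[s] 0) (𝓝 0) := by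
  have hlim : Tendsto (fun y : ℝ => K * y ^ p) (𝓝[s] 0) (𝓝 0) := by
    simpa [zero_rpow hp.ne'] using ((continuousAt_rpow_const 0 p (Or.inr hp.le)).tendsto.const_mul
      K).mono_left nhdsWithin_le_nhds
  exact squeeze_zero_norm' (eventually_nhdsWithin_of_forall hf) hlim

theorem continuousWithinAt_Icc_zero_of_abs_le_rpow (hp : 0 < p) (hf0 : f 0 = 0)
    (hf : ∀ y ∈ Ioc 0 h, |f y| ≤ K * y ^ p) : ContinuousWithinAt f (Icc 0 h) 0 := by
  rw [← continuousWithinAt_sdiff_self, Icc_sdiff_left, ContinuousWithinAt, hf0]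
  exact tendsto_nhdsWithin_zero_of_abs_le_rpow hp hf

theorem hasDerivWithinAt_Icc_zero_of_abs_le_rpow (hp : 1 < p) (hf0 : f 0 = 0)
    (hf : ∀ y ∈ Ioc 0 h, |f y| ≤ K * y ^ p) : HasDerivWithinAt f 0 (Icc 0 h) 0 := by
  rw [hasDerivWithinAt_iff_tendsto_slope, Icc_sdiff_left]
  refine tendsto_nhdsWithin_zero_of_abs_le_rpow (K := K) (sub_pos.2 hp) fun y hy => ?_
  rw [slope_def_field, hf0, sub_zero, sub_zero, abs_div, abs_of_pos hy.1,
    rpow_sub_one hy.1.ne', ← mul_div_assoc]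
  exact div_le_div_of_nonneg_right (hf y hy) hy.1.le

end VanishingAtZero

section UpdateAtLeftEndpoint

variable {f : ℝ → ℝ} {f' a b c x : ℝ}

theorem update_eventuallyEq_nhdsWithin_of_ne (s : Set ℝ) (hx : x ≠ a) :
    Function.update f a c =ᶠ[𝓝[s] x] f :=
  eventually_nhdsWithin_of_eventually_nhds
    ((eventually_ne_nhds hx).mono fun _ hy => Function.update_of_ne hy _ _)

theorem HasDerivWithinAt.update_Icc_of_Ioc (hf : HasDerivWithinAt f f' (Ioc a b) x)
    (hx : a < x) : HasDerivWithinAt (Function.update f a c) f' (Icc a b) x :=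
  (hf.mono_of_mem_nhdsWithin (Ioc_mem_nhdsWithin_Icc_of_lt hx)).congr_of_eventuallyEq
    (update_eventuallyEq_nhdsWithin_of_ne _ hx.ne') (Function.update_of_ne hx.ne' _ _)

theorem ContinuousWithinAt.update_Icc_of_Ioc (hf : ContinuousWithinAt f (Ioc a b) x)
    (hx : a < x) : ContinuousWithinAt (Function.update f a c) (Icc a b) x :=
  (hf.mono_of_mem_nhdsWithin (Ioc_mem_nhdsWithin_Icc_of_lt hx)).congr_of_eventuallyEq
    (update_eventuallyEq_nhdsWithin_of_ne _ hx.ne') (Function.update_of_ne hx.ne' _ _)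

end UpdateAtLeftEndpoint

theorem contDiffOn_Icc_of_abs_iteratedDerivWithin_Ioc_le {w : ℝ → ℝ} {h K ε : ℝ} {n : ℕ}
    (hh : 0 < h) (hε : 0 < ε) (hw0 : w 0 = 0) (hw : ContDiffOn ℝ n w (Ioc 0 h))
    (hbound : ∀ m ≤ n, ∀ x ∈ Ioc 0 h,
      |iteratedDerivWithin m w (Ioc 0 h) x| ≤ K * x ^ ((n : ℝ) - m + ε)) :
    ContDiffOn ℝ n w (Icc 0 h) ∧ ∀ m ≤ n, ∀ x ∈ Icc 0 h,
      |iteratedDerivWithin m w (Icc 0 h) x| ≤ K * x ^ ((n : ℝ) - m + ε) := by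
  set D : ℕ → ℝ → ℝ := fun m => iteratedDerivWithin m w (Ioc 0 h)
  -- `D m 0` is a one-sided derivative that need not exist; the candidate derivatives are `0` there
  set F : ℕ → ℝ → ℝ := fun m => Function.update (D m) 0 0
  have hFzero : ∀ m, F m 0 = 0 := fun m => Function.update_self _ _ _
  have hFD : ∀ m, ∀ x ∈ Ioc 0 h, F m x = D m x := fun m x hx =>
    Function.update_of_ne hx.1.ne' _ _
  have hFbound : ∀ m ≤ n, ∀ y ∈ Ioc 0 h, |F m y| ≤ K * y ^ ((n : ℝ) - m + ε) :=
    fun m hm y hy => hFD m y hy ▸ hbound m hm y hy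
  have hs' := uniqueDiffOn_Ioc 0 h
  have hderiv : ∀ m < n, ∀ x ∈ Icc 0 h, HasDerivWithinAt (F m) (F (m + 1) x) (Icc 0 h) x := by
    intro m hm x hx
    rcases hx.1.eq_or_lt with rfl | hx0
    · have hmn : (m : ℝ) + 1 ≤ n := mod_cast hm
      rw [hFzero (m + 1)]
      exact hasDerivWithinAt_Icc_zero_of_abs_le_rpow (by linarith) (hFzero m) (hFbound m hm.le)
    · have hD := (hw.differentiableOn_iteratedDerivWithin (mod_cast hm) hs' x
        ⟨hx0, hx.2⟩).hasDerivWithinAt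
      rw [← iteratedDerivWithin_succ] at hD
      rw [hFD (m + 1) x ⟨hx0, hx.2⟩]
      exact hD.update_Icc_of_Ioc hx0
  have hcont : ContinuousOn (F n) (Icc 0 h) := by
    intro x hx
    rcases hx.1.eq_or_lt with rfl | hx0
    · exact continuousWithinAt_Icc_zero_of_abs_le_rpow (by simpa) (hFzero n) (hFbound n le_rfl)
    · exact (hw.continuousOn_iteratedDerivWithin le_rfl hs' x ⟨hx0, hx.2⟩).update_Icc_of_Ioc hx0
  have hF0 : F 0 = w := Function.update_eq_self_iff.2 hw0.symm
  have hs := uniqueDiffOn_Icc hh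
  refine ⟨hF0 ▸ contDiffOn_of_hasDerivWithinAt_of_continuousOn hs hderiv hcont,
    fun m hm x hx => ?_⟩
  rw [← hF0, eqOn_iteratedDerivWithin_of_hasDerivWithinAt hs hderiv m hm hx]
  rcases hx.1.eq_or_lt with rfl | hx0
  · have : (m : ℝ) ≤ n := mod_cast hm
    rw [hFzero, abs_zero, zero_rpow (by linarith), mul_zero]
  · exact hFbound m hm x ⟨hx0, hx.2⟩

theorem abs_iteratedDerivWithin_le_mul_pow_of_flat {g : ℝ → ℝ} {h M : ℝ} {k : ℕ} (hh : 0 < h)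
    (hg : ContDiffOn ℝ k g (Icc 0 h)) (h0 : ∀ j < k, iteratedDerivWithin j g (Icc 0 h) 0 = 0)
    (hM : ∀ x ∈ Icc 0 h, |iteratedDerivWithin k g (Icc 0 h) x| ≤ M) :
    ∀ i ≤ k, ∀ x ∈ Icc 0 h, |iteratedDerivWithin i g (Icc 0 h) x| ≤ M * x ^ (k - i) := by
  have hs := uniqueDiffOn_Icc hh
  have hM0 : 0 ≤ M := (abs_nonneg _).trans (hM 0 ⟨le_rfl, hh.le⟩)
  suffices ∀ n i, i + n = k → ∀ x ∈ Icc 0 h,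
      |iteratedDerivWithin i g (Icc 0 h) x| ≤ M * x ^ n from
    fun i hi => this (k - i) i (by omega)
  intro n
  induction n with
  | zero =>
    rintro i rfl x hx
    simpa using hM x hx
  | succ n ih =>
    intro i hi x hx
    have hik : i < k := by omega
    have hderiv : ∀ y ∈ Ico 0 h, HasDerivWithinAt (iteratedDerivWithin i g (Icc 0 h))
        (iteratedDerivWithin (i + 1) g (Icc 0 h) y) (Ici y) y := by
      intro y hy
      rw [iteratedDerivWithin_succ]
      exact ((hg.differentiableOn_iteratedDerivWithin (mod_cast hik) hs y
        (Ico_subset_Icc_self hy)).hasDerivWithinAt).mono_of_mem_nhdsWithin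
        (Icc_mem_nhdsGE_of_mem hy)
    have hbound : ∀ y ∈ Ico 0 h, ‖iteratedDerivWithin (i + 1) g (Icc 0 h) y‖ ≤
        M * ((n + 1 : ℕ) * y ^ n) := by
      intro y hy
      calc ‖iteratedDerivWithin (i + 1) g (Icc 0 h) y‖ ≤ M * y ^ n :=
            ih (i + 1) (by omega) y (Ico_subset_Icc_self hy)
        _ ≤ M * ((n + 1 : ℕ) * y ^ n) := by
          gcongr
          exact le_mul_of_one_le_left (pow_nonneg hy.1 n) (by norm_cast; omega)
    simpa using image_norm_le_of_norm_deriv_right_le_deriv_boundary (B := fun y => M * y ^ (n + 1))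
      (hg.continuousOn_iteratedDerivWithin (mod_cast hik.le) hs) hderiv
      (by simp [h0 i hik]) (fun y => by simpa using (hasDerivAt_pow (n + 1) y).const_mul M)
      hbound hx

theorem iteratedDerivWithin_rpow_const {s : Set ℝ} {x : ℝ} (hs : UniqueDiffOn ℝ s) (hx : x ∈ s)
    (hx0 : x ≠ 0) (p : ℝ) (n : ℕ) :
    iteratedDerivWithin n (fun y => y ^ p) s x = (descPochhammer ℝ n).eval p * x ^ (p - n) := by
  rw [iteratedDerivWithin_eq_iteratedDeriv hs (contDiffAt_rpow_const_of_ne hx0) hx,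
    iteratedDeriv_eq_iterate, iter_deriv_rpow_const]

noncomputable def rpowLeibnizConst (a : ℝ) (m : ℕ) : ℝ :=
  ∑ i ∈ Finset.range (m + 1), (m.choose i : ℝ) * |(descPochhammer ℝ (m - i)).eval a|

theorem rpowLeibnizConst_nonneg (a : ℝ) (m : ℕ) : 0 ≤ rpowLeibnizConst a m := by
  unfold rpowLeibnizConst; positivity

theorem abs_iteratedDerivWithin_mul_rpow_le {g : ℝ → ℝ} {s : Set ℝ} {a M x : ℝ} {k m : ℕ}
    (hs : UniqueDiffOn ℝ s) (hs0 : s ⊆ Ioi 0) (hg : ContDiffOn ℝ m g s) (hx : x ∈ s)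
    (hmk : m ≤ k) (hgx : ∀ i ≤ m, |iteratedDerivWithin i g s x| ≤ M * x ^ (k - i)) :
    |iteratedDerivWithin m (fun y => g y * y ^ a) s x| ≤
      rpowLeibnizConst a m * M * x ^ (a + k - m) := by
  have hx0 : 0 < x := hs0 hx
  have hrpow : ContDiffOn ℝ m (fun y => y ^ a) s := fun y hy =>
    (contDiffAt_rpow_const_of_ne (hs0 hy).ne').contDiffWithinAt
  have hleib := norm_iteratedFDerivWithin_mul_le hg hrpow hs hx le_rfl
  simp only [norm_iteratedFDerivWithin_eq_norm_iteratedDerivWithin, Real.norm_eq_abs] at hleib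
  refine hleib.trans ?_
  rw [rpowLeibnizConst, Finset.sum_mul, Finset.sum_mul]
  refine Finset.sum_le_sum fun i hi => ?_
  have him : i ≤ m := Nat.lt_succ_iff.mp (Finset.mem_range.mp hi)
  rw [iteratedDerivWithin_rpow_const hs hx hx0.ne', abs_mul, abs_of_pos (rpow_pos_of_pos hx0 _)]
  calc (m.choose i : ℝ) * |iteratedDerivWithin i g s x| *
        (|(descPochhammer ℝ (m - i)).eval a| * x ^ (a - (m - i : ℕ)))
      ≤ (m.choose i : ℝ) * (M * x ^ (k - i)) *
        (|(descPochhammer ℝ (m - i)).eval a| * x ^ (a - (m - i : ℕ))) := by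
        gcongr; exact hgx i him
    _ = (m.choose i : ℝ) * |(descPochhammer ℝ (m - i)).eval a| * M *
        (x ^ ((k - i : ℕ) : ℝ) * x ^ (a - (m - i : ℕ))) := by rw [rpow_natCast]; ring
    _ = (m.choose i : ℝ) * |(descPochhammer ℝ (m - i)).eval a| * M * x ^ (a + k - m) := by
        rw [← rpow_add hx0, Nat.cast_sub him, Nat.cast_sub (him.trans hmk)]; ring_nf

theorem abs_iteratedDerivWithin_mul_rpow_Ioc_le {g : ℝ → ℝ} {h a M x : ℝ} {k m : ℕ}
    (hg : ContDiffOn ℝ m g (Icc 0 h)) (hmk : m ≤ k)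
    (hgx : ∀ i ≤ k, ∀ y ∈ Icc 0 h, |iteratedDerivWithin i g (Icc 0 h) y| ≤ M * y ^ (k - i))
    (hx : x ∈ Ioc 0 h) :
    |iteratedDerivWithin m (fun y => g y * y ^ a) (Ioc 0 h) x| ≤
      rpowLeibnizConst a m * M * x ^ (a + k - m) :=
  abs_iteratedDerivWithin_mul_rpow_le (uniqueDiffOn_Ioc 0 h) (fun _ hy => hy.1)
    (hg.mono Ioc_subset_Icc_self) hx hmk fun i hi => by
      rw [iteratedDerivWithin_Ioc_eq_Icc hx.1]
      exact hgx i (hi.trans hmk) x (Ioc_subset_Icc_self hx)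

theorem rpow_le_one_add_rpow_of_mem_Icc {x h e p : ℝ} (hx : x ∈ Icc 0 h) (he : 0 ≤ e)
    (hep : e ≤ p) : x ^ e ≤ (1 + h) ^ p :=
  calc x ^ e ≤ (1 + h) ^ e := rpow_le_rpow hx.1 (by linarith [hx.2]) he
    _ ≤ (1 + h) ^ p := rpow_le_rpow_of_exponent_le (by linarith [hx.1.trans hx.2]) hep

theorem stmt4 (h γ : ℝ) (k : ℕ) (hh : 0 < h) (hγ : 0 < γ) (hk : 1 ≤ k) :
    ∃ C > 0, ∀ (g : ℝ → ℝ) (M : ℝ),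
      ContDiffOn ℝ k g (Set.Icc 0 h) →
      (∀ j ≤ k, iteratedDerivWithin j g (Set.Icc 0 h) 0 = 0) →
      (∀ x ∈ Set.Icc (0 : ℝ) h, |iteratedDerivWithin k g (Set.Icc 0 h) x| ≤ M) →
      ContDiffOn ℝ (k - 1) (fun x : ℝ => g x * x ^ (γ - 1)) (Set.Icc 0 h) ∧
      ∀ j ≤ k - 1, ∀ x ∈ Set.Icc (0 : ℝ) h,
        |iteratedDerivWithin j (fun x : ℝ => g x * x ^ (γ - 1)) (Set.Icc 0 h) x| ≤ C * M := by
  set B := ∑ m ∈ Finset.range k, rpowLeibnizConst (γ - 1) m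
  have hB : 0 ≤ B := Finset.sum_nonneg fun m _ => rpowLeibnizConst_nonneg _ m
  refine ⟨(B + 1) * (1 + h) ^ (γ + k), by positivity, fun g M hg h0 hM => ?_⟩
  have hM0 : 0 ≤ M := (abs_nonneg _).trans (hM 0 ⟨le_rfl, hh.le⟩)
  have hgx := abs_iteratedDerivWithin_le_mul_pow_of_flat hh hg (fun j hj => h0 j hj.le) hM
  have hg' : ContDiffOn ℝ (k - 1 : ℕ) g (Icc 0 h) := hg.of_le (by norm_cast; omega)
  have hbound : ∀ m ≤ k - 1, ∀ x ∈ Ioc 0 h,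
      |iteratedDerivWithin m (fun x : ℝ => g x * x ^ (γ - 1)) (Ioc 0 h) x| ≤
        B * M * x ^ (((k - 1 : ℕ) : ℝ) - m + γ) := by
    intro m hm x hx
    have hmB : rpowLeibnizConst (γ - 1) m ≤ B :=
      Finset.single_le_sum (fun m _ => rpowLeibnizConst_nonneg _ m) (Finset.mem_range.2 (by omega))
    have hexp : γ - 1 + k - m = ((k - 1 : ℕ) : ℝ) - m + γ := by push_cast [hk]; ring
    have hpow := rpow_nonneg hx.1.le (((k - 1 : ℕ) : ℝ) - m + γ)
    calc _ ≤ rpowLeibnizConst (γ - 1) m * M * x ^ (γ - 1 + k - m) :=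
          abs_iteratedDerivWithin_mul_rpow_Ioc_le (hg'.of_le (mod_cast hm)) (by omega) hgx hx
      _ ≤ B * M * x ^ (((k - 1 : ℕ) : ℝ) - m + γ) := by rw [hexp]; gcongr
  obtain ⟨hcd, hb⟩ := contDiffOn_Icc_of_abs_iteratedDerivWithin_Ioc_le hh hγ
    (by simp [show g 0 = 0 by simpa using h0 0 (Nat.zero_le k)])
    ((hg'.mono Ioc_subset_Icc_self).mul fun y hy =>
      (contDiffAt_rpow_const_of_ne hy.1.ne').contDiffWithinAt) hbound
  refine ⟨by exact_mod_cast hcd, fun j hj x hx => ?_⟩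
  have hj' : (j : ℝ) ≤ ((k - 1 : ℕ) : ℝ) := mod_cast hj
  calc _ ≤ B * M * x ^ (((k - 1 : ℕ) : ℝ) - j + γ) := hb j hj x hx
    _ ≤ (B + 1) * M * (1 + h) ^ (γ + k) :=
        mul_le_mul (by gcongr; linarith) (rpow_le_one_add_rpow_of_mem_Icc hx (by linarith)
          (by push_cast [hk]; linarith [(j.cast_nonneg : (0 : ℝ) ≤ j)])) (rpow_nonneg hx.1 _)
          (by positivity)
    _ = (B + 1) * (1 + h) ^ (γ + k) * M := by ring
end

section
/- Let 0 < α < 1, h > 0, and g : [0,h] → ℝ continuous with g(0) = 0 and g α-Hölder continuous with constant L (i.e. |g(x)-g(y)| ≤ L|x-y|^α). Define w(x) := ∫₀ˣ ∑_{j} γ_j c_j t^(γ_j - 1) g(t) dt where each γ_j ≥ α. Then for a single term: if γ ≥ α and v(x) := ∫₀ˣ t^(γ-1) g(t) dt, then |v(y) - v(x)| ≤ C L (y-x)^(2α) for all 0 ≤ x < y ≤ h whenever 2α ≤ 1, with C depending only on α, γ, h. -/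
/-! Since `g 0 = 0`, Hölder continuity gives `|g t| ≤ L t^α`, so on `(0, h]` the integrand is
bounded by `L t^(γ+α-1) ≤ L h^(γ-α) t^(2α-1)`. Integrating this bound over `[x, y]` gives
`L h^(γ-α) (y^(2α) - x^(2α)) / (2α)`, and `y^(2α) - x^(2α) ≤ (y - x)^(2α)` by subadditivity of
`t ↦ t^(2α)` when `2α ≤ 1`. -/

open Real Set

lemma Real.rpow_sub_rpow_le_rpow_sub {x y p : ℝ} (hx : 0 ≤ x) (hxy : x ≤ y) (hp0 : 0 ≤ p)
    (hp1 : p ≤ 1) : y ^ p - x ^ p ≤ (y - x) ^ p := by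
  have := Real.rpow_add_le_add_rpow hx (sub_nonneg.2 hxy) hp0 hp1
  rw [add_sub_cancel] at this
  linarith

lemma abs_le_mul_rpow_of_holder_of_map_zero {g : ℝ → ℝ} {L α h : ℝ} (hh : 0 ≤ h) (hg0 : g 0 = 0)
    (hg : ∀ x ∈ Icc (0 : ℝ) h, ∀ y ∈ Icc (0 : ℝ) h, |g x - g y| ≤ L * |x - y| ^ α) :
    ∀ t ∈ Icc (0 : ℝ) h, |g t| ≤ L * t ^ α := by
  intro t ht
  simpa [hg0, abs_of_nonneg ht.1] using hg t ht 0 ⟨le_rfl, hh⟩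

lemma abs_mul_rpow_le_of_abs_le_mul_rpow {g : ℝ → ℝ} {L α γ h t : ℝ} (hL : 0 ≤ L) (hαγ : α ≤ γ)
    (ht : 0 < t) (hth : t ≤ h) (hgt : |g t| ≤ L * t ^ α) :
    |t ^ (γ - 1) * g t| ≤ L * h ^ (γ - α) * t ^ (2 * α - 1) := by
  have hsplit : t ^ (γ - 1) * t ^ α = t ^ (γ - α) * t ^ (2 * α - 1) := by
    rw [← rpow_add ht, ← rpow_add ht]
    ring_nf
  calc |t ^ (γ - 1) * g t| = t ^ (γ - 1) * |g t| := by
        rw [abs_mul, abs_of_nonneg (rpow_nonneg ht.le _)]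
    _ ≤ t ^ (γ - 1) * (L * t ^ α) := by gcongr
    _ = L * t ^ (γ - α) * t ^ (2 * α - 1) := by rw [mul_left_comm, hsplit, mul_assoc]
    _ ≤ L * h ^ (γ - α) * t ^ (2 * α - 1) := by gcongr

lemma abs_intervalIntegral_le_of_abs_le_mul_rpow {f : ℝ → ℝ} {M p x y : ℝ} (hp : 0 < p)
    (hxy : x ≤ y) (hf : ∀ t ∈ Ioc x y, |f t| ≤ M * t ^ (p - 1)) :
    |∫ t in x..y, f t| ≤ M * ((y ^ p - x ^ p) / p) := by
  have hp1 : -1 < p - 1 := by linarith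
  have hbound : IntervalIntegrable (fun t => M * t ^ (p - 1)) MeasureTheory.volume x y :=
    (intervalIntegral.intervalIntegrable_rpow' hp1).const_mul M
  have := intervalIntegral.norm_integral_le_of_norm_le hxy
    (Filter.Eventually.of_forall fun t ht => (Real.norm_eq_abs (f t)).trans_le (hf t ht)) hbound
  rwa [intervalIntegral.integral_const_mul, integral_rpow (Or.inl hp1), sub_add_cancel] at this

lemma intervalIntegrable_rpow_mul_of_continuousOn {g : ℝ → ℝ} {γ h b : ℝ} (hγ : 0 < γ)
    (hg : ContinuousOn g (Icc 0 h)) (hb : 0 ≤ b) (hbh : b ≤ h) :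
    IntervalIntegrable (fun t => t ^ (γ - 1) * g t) MeasureTheory.volume 0 b := by
  refine (intervalIntegral.intervalIntegrable_rpow' (by linarith)).mul_continuousOn (hg.mono ?_)
  rw [uIcc_of_le hb]
  exact Icc_subset_Icc le_rfl hbh

theorem stmt8_general (α γ h : ℝ) (hα0 : 0 < α) (hh : 0 < h)
    (hγ : α ≤ γ) (h2α : 2 * α ≤ 1) :
    ∃ C > 0, ∀ (g : ℝ → ℝ) (L : ℝ),
      ContinuousOn g (Set.Icc 0 h) → g 0 = 0 →
      (∀ x ∈ Set.Icc (0 : ℝ) h, ∀ y ∈ Set.Icc (0 : ℝ) h, |g x - g y| ≤ L * |x - y| ^ α) →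
      ∀ x y : ℝ, 0 ≤ x → x < y → y ≤ h →
        |(∫ t in (0 : ℝ)..y, t ^ (γ - 1) * g t) - ∫ t in (0 : ℝ)..x, t ^ (γ - 1) * g t| ≤
          C * L * (y - x) ^ (2 * α) := by
  refine ⟨h ^ (γ - α) / (2 * α), by positivity, ?_⟩
  intro g L hgc hg0 hH x y hx hxy hyh
  have hgb := abs_le_mul_rpow_of_holder_of_map_zero hh.le hg0 hH
  have hL : 0 ≤ L := nonneg_of_mul_nonneg_left ((abs_nonneg _).trans (hgb h ⟨hh.le, le_rfl⟩))
    (rpow_pos_of_pos hh α)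
  have hγ0 : 0 < γ := hα0.trans_le hγ
  rw [intervalIntegral.integral_interval_sub_left
    (intervalIntegrable_rpow_mul_of_continuousOn hγ0 hgc (hx.trans hxy.le) hyh)
    (intervalIntegrable_rpow_mul_of_continuousOn hγ0 hgc hx (hxy.le.trans hyh))]
  have hpoint : ∀ t ∈ Ioc x y, |t ^ (γ - 1) * g t| ≤ L * h ^ (γ - α) * t ^ (2 * α - 1) :=
    fun t ht => abs_mul_rpow_le_of_abs_le_mul_rpow hL hγ (hx.trans_lt ht.1) (ht.2.trans hyh)
      (hgb t ⟨(hx.trans_lt ht.1).le, ht.2.trans hyh⟩)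
  calc _ ≤ L * h ^ (γ - α) * ((y ^ (2 * α) - x ^ (2 * α)) / (2 * α)) :=
        abs_intervalIntegral_le_of_abs_le_mul_rpow (by positivity) hxy.le hpoint
    _ ≤ L * h ^ (γ - α) * ((y - x) ^ (2 * α) / (2 * α)) := by
        gcongr
        exact rpow_sub_rpow_le_rpow_sub hx hxy.le (by positivity) h2α
    _ = h ^ (γ - α) / (2 * α) * L * (y - x) ^ (2 * α) := by ring

theorem stmt8 (α γ h : ℝ) (hα0 : 0 < α) (hα1 : α < 1) (hh : 0 < h)
    (hγ : α ≤ γ) (h2α : 2 * α ≤ 1) :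
    ∃ C > 0, ∀ (g : ℝ → ℝ) (L : ℝ),
      ContinuousOn g (Set.Icc 0 h) → g 0 = 0 →
      (∀ x ∈ Set.Icc (0 : ℝ) h, ∀ y ∈ Set.Icc (0 : ℝ) h, |g x - g y| ≤ L * |x - y| ^ α) →
      ∀ x y : ℝ, 0 ≤ x → x < y → y ≤ h →
        |(∫ t in (0 : ℝ)..y, t ^ (γ - 1) * g t) - ∫ t in (0 : ℝ)..x, t ^ (γ - 1) * g t| ≤
          C * L * (y - x) ^ (2 * α) :=
  stmt8_general α γ h hα0 hh hγ h2α
end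

section
/- Let 0 < α < 1 and l ∈ ℕ with l ≥ 1, lα ≤ 1 < (l+1)α. Let h > 0, γ ≥ α with lα + γ > 1, and let g : [0,h] → ℝ satisfy g(0) = 0 and |g(x) - g(y)| ≤ L|x-y|^(lα) for all x, y ∈ [0,h]. Define v(x) := x^(γ-1) g(x) for 0 < x ≤ h and v(0) := 0. Then v is continuous on [0,h], and there is a constant C depending only on α, l, γ, h such that |v(x) - v(y)| ≤ C L |x-y|^((l+1)α - 1) for all x, y ∈ [0,h]. -/
set_option maxHeartbeats 1000000
open Real

lemma aux_mvt (p : ℝ) {y x : ℝ} (hy : 0 < y) (hxy : y ≤ x) :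
    |x ^ p - y ^ p| ≤ |p| * (y ^ (p - 1) + x ^ (p - 1)) * (x - y) := by
  have hx : 0 < x := hy.trans_le hxy
  have hconv : Convex ℝ (Set.Icc y x) := convex_Icc y x
  have hder : ∀ t ∈ Set.Icc y x, HasDerivWithinAt (fun t : ℝ => t ^ p)
      (p * t ^ (p - 1)) (Set.Icc y x) t := by
    intro t ht
    exact (Real.hasDerivAt_rpow_const (Or.inl (hy.trans_le ht.1).ne')).hasDerivWithinAt
  have hbd : ∀ t ∈ Set.Icc y x, ‖p * t ^ (p - 1)‖ ≤ |p| * (y ^ (p - 1) + x ^ (p - 1)) := by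
    intro t ht
    have ht0 : 0 < t := hy.trans_le ht.1
    rw [norm_mul, Real.norm_eq_abs, Real.norm_eq_abs, abs_of_nonneg (Real.rpow_nonneg ht0.le _)]
    have : t ^ (p - 1) ≤ y ^ (p - 1) + x ^ (p - 1) := by
      rcases le_or_gt (p - 1) 0 with hp | hp
      · have := Real.rpow_le_rpow_of_nonpos hy ht.1 hp
        have h2 : (0:ℝ) ≤ x ^ (p - 1) := Real.rpow_nonneg hx.le _
        linarith
      · have := Real.rpow_le_rpow ht0.le ht.2 hp.le
        have h2 : (0:ℝ) ≤ y ^ (p - 1) := Real.rpow_nonneg hy.le _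
        linarith
    exact mul_le_mul_of_nonneg_left this (abs_nonneg p)
  have := hconv.norm_image_sub_le_of_norm_hasDerivWithin_le hder hbd
    (Set.right_mem_Icc.2 hxy) (Set.left_mem_Icc.2 hxy)
  rw [abs_sub_comm]
  have habs : |y - x| = x - y := by rw [abs_sub_comm]; exact abs_of_nonneg (sub_nonneg.2 hxy)
  simpa [Real.norm_eq_abs, habs] using this

lemma aux_max {h d e : ℝ} (hd : 0 < d) (hdh : d ≤ h) (he : 0 ≤ e) :
    d ^ e ≤ max 1 (h ^ e) := by
  rcases le_or_gt d 1 with h1 | h1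
  · exact le_max_of_le_left (Real.rpow_le_one hd.le h1 he)
  · exact le_max_of_le_right (Real.rpow_le_rpow hd.le hdh he)

theorem stmt9 (α γ h : ℝ) (l : ℕ)
    (hα0 : 0 < α) (hα1 : α < 1) (hl : 1 ≤ l)
    (hlα : (l : ℝ) * α ≤ 1) (hlα' : 1 < ((l : ℝ) + 1) * α)
    (hh : 0 < h) (hγ : α ≤ γ) (hsum : 1 < (l : ℝ) * α + γ) :
    ∃ C > 0, ∀ (g : ℝ → ℝ) (L : ℝ),
      g 0 = 0 →
      (∀ x ∈ Set.Icc (0 : ℝ) h, ∀ y ∈ Set.Icc (0 : ℝ) h,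
        |g x - g y| ≤ L * |x - y| ^ ((l : ℝ) * α)) →
      ContinuousOn (fun x : ℝ => x ^ (γ - 1) * g x) (Set.Icc 0 h) ∧
      ∀ x ∈ Set.Icc (0 : ℝ) h, ∀ y ∈ Set.Icc (0 : ℝ) h,
        |x ^ (γ - 1) * g x - y ^ (γ - 1) * g y| ≤
          C * L * |x - y| ^ (((l : ℝ) + 1) * α - 1) := by
  have hl1 : (1 : ℝ) ≤ (l : ℝ) := by exact_mod_cast hl
  set β : ℝ := (l : ℝ) * α with hβdef
  set θ : ℝ := ((l : ℝ) + 1) * α - 1 with hθdef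
  have hβpos : 0 < β := mul_pos (by linarith) hα0
  have hθpos : 0 < θ := by rw [hθdef]; linarith
  have hθβα : θ = β + α - 1 := by rw [hθdef, hβdef]; ring
  have hγα : 0 ≤ γ - α := by linarith
  have h2βα : 0 ≤ 2 - β - α := by linarith
  have hε : 0 < γ - 1 + β := by linarith
  set M : ℝ := max 1 (h ^ (γ - α)) with hMdef
  have hM1 : (1 : ℝ) ≤ M := le_max_left _ _
  have hM0 : 0 < M := lt_of_lt_of_le one_pos hM1
  set N : ℝ := h ^ (γ - 2 + β) * max 1 (h ^ (2 - β - α)) with hNdef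
  have hN0 : 0 ≤ N := mul_nonneg (Real.rpow_nonneg hh.le _)
    (le_trans zero_le_one (le_max_left _ _))
  have h2ε : (0 : ℝ) < 2 ^ (γ - 1 + β) := Real.rpow_pos_of_pos two_pos _
  set C : ℝ := (2 ^ (γ - 1 + β) + 1) * M + M + 2 * |γ - 1| * M + 2 * |γ - 1| * N with hCdef
  have hCsub1 : (2 ^ (γ - 1 + β) + 1) * M ≤ C := by
    have h1 : 0 ≤ 2 * |γ - 1| * M := mul_nonneg (by positivity) hM0.le
    have h2 : 0 ≤ 2 * |γ - 1| * N := mul_nonneg (by positivity) hN0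
    rw [hCdef]; linarith
  have hCsub2 : M + 2 * |γ - 1| * M + 2 * |γ - 1| * N ≤ C := by
    have h1 : 0 ≤ (2 ^ (γ - 1 + β) + 1) * M := mul_nonneg (by positivity) hM0.le
    rw [hCdef]; linarith
  have hC0 : 0 < C := by
    have h1 : 0 < (2 ^ (γ - 1 + β) + 1) * M := mul_pos (by positivity) hM0
    linarith [hCsub1]
  refine ⟨C, hC0, fun g L hg0 hgH => ?_⟩
  have hmem0 : (0 : ℝ) ∈ Set.Icc (0 : ℝ) h := ⟨le_refl _, hh.le⟩
  have hL : 0 ≤ L := by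
    have := hgH h ⟨hh.le, le_refl _⟩ 0 hmem0
    have hpow : 0 < |h - 0| ^ β := by
      rw [sub_zero, abs_of_pos hh]; exact Real.rpow_pos_of_pos hh β
    nlinarith [abs_nonneg (g h - g 0)]
  have hgb : ∀ z ∈ Set.Icc (0 : ℝ) h, |g z| ≤ L * z ^ β := by
    intro z hz
    have := hgH z hz 0 hmem0
    simpa [hg0, abs_of_nonneg hz.1] using this
  -- key estimate for y ≤ x
  have key : ∀ x ∈ Set.Icc (0 : ℝ) h, ∀ y ∈ Set.Icc (0 : ℝ) h, y ≤ x →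
      |x ^ (γ - 1) * g x - y ^ (γ - 1) * g y| ≤ C * L * (x - y) ^ θ := by
    intro x hx y hy hxy
    rcases eq_or_lt_of_le hxy with rfl | hlt
    · simp [Real.zero_rpow hθpos.ne']
    have hdpos : 0 < x - y := sub_pos.2 hlt
    have hxpos : 0 < x := lt_of_le_of_lt hy.1 hlt
    have hdh : x - y ≤ h := by linarith [hx.2, hy.1]
    have hdθ : 0 < (x - y) ^ θ := Real.rpow_pos_of_pos hdpos θ
    have hdθ0 : 0 ≤ (x - y) ^ θ := hdθ.le
    have hdγα : (x - y) ^ (γ - α) ≤ M := aux_max hdpos hdh hγα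
    rcases le_or_gt y (x / 2) with hcase | hcase
    · -- Case 1 : y ≤ x/2
      have hx2d : x ≤ 2 * (x - y) := by linarith
      have hyd : y ≤ x - y := by linarith
      have e1 : |x ^ (γ - 1) * g x| ≤ L * x ^ (γ - 1 + β) := by
        rw [abs_mul, abs_of_nonneg (Real.rpow_nonneg hxpos.le _), Real.rpow_add hxpos]
        calc x ^ (γ - 1) * |g x| ≤ x ^ (γ - 1) * (L * x ^ β) :=
              mul_le_mul_of_nonneg_left (hgb x hx) (Real.rpow_nonneg hxpos.le _)
          _ = L * (x ^ (γ - 1) * x ^ β) := by ring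
      have e1' : x ^ (γ - 1 + β) ≤ 2 ^ (γ - 1 + β) * (x - y) ^ (γ - 1 + β) := by
        rw [← Real.mul_rpow two_pos.le hdpos.le]
        exact Real.rpow_le_rpow hxpos.le hx2d hε.le
      have e2 : |y ^ (γ - 1) * g y| ≤ L * (x - y) ^ (γ - 1 + β) := by
        rcases eq_or_lt_of_le hy.1 with h0 | hypos
        · subst h0
          rw [hg0, mul_zero, abs_zero, sub_zero]
          exact mul_nonneg hL (Real.rpow_nonneg hxpos.le _)
        · have e2a : |y ^ (γ - 1) * g y| ≤ L * y ^ (γ - 1 + β) := by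
            rw [abs_mul, abs_of_nonneg (Real.rpow_nonneg hypos.le _), Real.rpow_add hypos]
            calc y ^ (γ - 1) * |g y| ≤ y ^ (γ - 1) * (L * y ^ β) :=
                  mul_le_mul_of_nonneg_left (hgb y hy) (Real.rpow_nonneg hypos.le _)
              _ = L * (y ^ (γ - 1) * y ^ β) := by ring
          have e2b : y ^ (γ - 1 + β) ≤ (x - y) ^ (γ - 1 + β) :=
            Real.rpow_le_rpow hypos.le hyd hε.le
          exact e2a.trans (mul_le_mul_of_nonneg_left e2b hL)
      have esplit : (x - y) ^ (γ - 1 + β) = (x - y) ^ θ * (x - y) ^ (γ - α) := by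
        rw [← Real.rpow_add hdpos, hθβα]; ring_nf
      have efinal : (x - y) ^ (γ - 1 + β) ≤ (x - y) ^ θ * M := by
        rw [esplit]; exact mul_le_mul_of_nonneg_left hdγα hdθ0
      calc |x ^ (γ - 1) * g x - y ^ (γ - 1) * g y|
          ≤ |x ^ (γ - 1) * g x| + |y ^ (γ - 1) * g y| := abs_sub _ _
        _ ≤ L * x ^ (γ - 1 + β) + L * (x - y) ^ (γ - 1 + β) := add_le_add e1 e2
        _ ≤ L * (2 ^ (γ - 1 + β) * (x - y) ^ (γ - 1 + β)) + L * (x - y) ^ (γ - 1 + β) :=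
            add_le_add (mul_le_mul_of_nonneg_left e1' hL) (le_refl _)
        _ = (2 ^ (γ - 1 + β) + 1) * L * (x - y) ^ (γ - 1 + β) := by ring
        _ ≤ (2 ^ (γ - 1 + β) + 1) * L * ((x - y) ^ θ * M) := by
            apply mul_le_mul_of_nonneg_left efinal
            exact mul_nonneg (by positivity) hL
        _ = ((2 ^ (γ - 1 + β) + 1) * M) * L * (x - y) ^ θ := by ring
        _ ≤ C * L * (x - y) ^ θ := by
            apply mul_le_mul_of_nonneg_right (mul_le_mul_of_nonneg_right hCsub1 hL) hdθ0
    · -- Case 2 : x/2 < y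
      have hypos : 0 < y := lt_of_le_of_lt (by linarith : (0:ℝ) ≤ x / 2) hcase
      have hdy : x - y ≤ y := by linarith
      have hdx : x - y ≤ x := by linarith [hy.1]
      -- Term 1
      have hgxy : |g x - g y| ≤ L * (x - y) ^ β := by
        have := hgH x hx y hy
        rwa [abs_of_nonneg (sub_nonneg.2 hxy)] at this
      have t1 : x ^ (γ - 1) * |g x - g y| ≤ M * L * (x - y) ^ θ := by
        have hsplit : (x - y) ^ β = (x - y) ^ θ * (x - y) ^ (1 - α) := by
          rw [← Real.rpow_add hdpos, hθβα]; ring_nf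
        have h1 : (x - y) ^ (1 - α) ≤ x ^ (1 - α) :=
          Real.rpow_le_rpow hdpos.le hdx (by linarith)
        have h2 : x ^ (γ - 1) * x ^ (1 - α) = x ^ (γ - α) := by
          rw [← Real.rpow_add hxpos]; ring_nf
        have h3 : x ^ (γ - α) ≤ M := aux_max hxpos hx.2 hγα
        calc x ^ (γ - 1) * |g x - g y| ≤ x ^ (γ - 1) * (L * (x - y) ^ β) :=
              mul_le_mul_of_nonneg_left hgxy (Real.rpow_nonneg hxpos.le _)
          _ = L * (x - y) ^ θ * (x ^ (γ - 1) * (x - y) ^ (1 - α)) := by rw [hsplit]; ring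
          _ ≤ L * (x - y) ^ θ * (x ^ (γ - 1) * x ^ (1 - α)) := by
              apply mul_le_mul_of_nonneg_left
                (mul_le_mul_of_nonneg_left h1 (Real.rpow_nonneg hxpos.le _))
              exact mul_nonneg hL hdθ0
          _ = L * (x - y) ^ θ * x ^ (γ - α) := by rw [h2]
          _ ≤ L * (x - y) ^ θ * M := by
              apply mul_le_mul_of_nonneg_left h3 (mul_nonneg hL hdθ0)
          _ = M * L * (x - y) ^ θ := by ring
      -- Term 2
      have hmvt : |x ^ (γ - 1) - y ^ (γ - 1)| ≤
          |γ - 1| * (y ^ (γ - 2) + x ^ (γ - 2)) * (x - y) := by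
        have := aux_mvt (γ - 1) hypos hxy
        rwa [show γ - 1 - 1 = γ - 2 from by ring] at this
      have hxγ2 : x ^ (γ - 2) ≤ y ^ (γ - 2) + h ^ (γ - 2) := by
        rcases le_or_gt γ 2 with hγ2 | hγ2
        · have := Real.rpow_le_rpow_of_nonpos hypos hxy (by linarith : γ - 2 ≤ 0)
          linarith [Real.rpow_nonneg hh.le (γ - 2)]
        · have := Real.rpow_le_rpow hxpos.le hx.2 (by linarith : (0:ℝ) ≤ γ - 2)
          linarith [Real.rpow_nonneg hypos.le (γ - 2)]
      have hsplitd : (x - y) = (x - y) ^ θ * (x - y) ^ (2 - β - α) := by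
        rw [← Real.rpow_add hdpos, hθβα]
        rw [show β + α - 1 + (2 - β - α) = 1 from by ring, Real.rpow_one]
      have partA : y ^ (γ - 2) * y ^ β * (x - y) ≤ M * (x - y) ^ θ := by
        have h1 : (x - y) ^ (2 - β - α) ≤ y ^ (2 - β - α) :=
          Real.rpow_le_rpow hdpos.le hdy h2βα
        have h2 : y ^ (γ - 2) * y ^ β * y ^ (2 - β - α) = y ^ (γ - α) := by
          rw [← Real.rpow_add hypos, ← Real.rpow_add hypos]; ring_nf
        have h3 : y ^ (γ - α) ≤ M := aux_max hypos hy.2 hγα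
        have hyy : 0 ≤ y ^ (γ - 2) * y ^ β :=
          mul_nonneg (Real.rpow_nonneg hypos.le _) (Real.rpow_nonneg hypos.le _)
        calc y ^ (γ - 2) * y ^ β * (x - y)
            = (y ^ (γ - 2) * y ^ β * (x - y) ^ (2 - β - α)) * (x - y) ^ θ := by
              conv_lhs => rw [hsplitd]
              ring
          _ ≤ (y ^ (γ - 2) * y ^ β * y ^ (2 - β - α)) * (x - y) ^ θ := by
              apply mul_le_mul_of_nonneg_right _ hdθ0
              exact mul_le_mul_of_nonneg_left h1 hyy
          _ = y ^ (γ - α) * (x - y) ^ θ := by rw [h2]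
          _ ≤ M * (x - y) ^ θ := mul_le_mul_of_nonneg_right h3 hdθ0
      have partB : h ^ (γ - 2) * y ^ β * (x - y) ≤ N * (x - y) ^ θ := by
        have h1 : y ^ β ≤ h ^ β := Real.rpow_le_rpow hypos.le hy.2 hβpos.le
        have h2 : (x - y) ^ (2 - β - α) ≤ max 1 (h ^ (2 - β - α)) :=
          aux_max hdpos hdh h2βα
        have h3 : h ^ (γ - 2) * h ^ β = h ^ (γ - 2 + β) := (Real.rpow_add hh _ _).symm
        have hh2 : 0 ≤ h ^ (γ - 2) := Real.rpow_nonneg hh.le _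
        calc h ^ (γ - 2) * y ^ β * (x - y)
            = (h ^ (γ - 2) * y ^ β * (x - y) ^ (2 - β - α)) * (x - y) ^ θ := by
              conv_lhs => rw [hsplitd]
              ring
          _ ≤ (h ^ (γ - 2) * h ^ β * max 1 (h ^ (2 - β - α))) * (x - y) ^ θ := by
              apply mul_le_mul_of_nonneg_right _ hdθ0
              apply mul_le_mul
              · exact mul_le_mul_of_nonneg_left h1 hh2
              · exact h2
              · exact Real.rpow_nonneg hdpos.le _
              · exact mul_nonneg hh2 (Real.rpow_nonneg hh.le _)
          _ = N * (x - y) ^ θ := by rw [hNdef, h3]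
      have t2 : |x ^ (γ - 1) - y ^ (γ - 1)| * |g y| ≤
          (2 * |γ - 1| * M + 2 * |γ - 1| * N) * L * (x - y) ^ θ := by
        have hgy : |g y| ≤ L * y ^ β := hgb y hy
        have hgy0 : 0 ≤ L * y ^ β := mul_nonneg hL (Real.rpow_nonneg hypos.le _)
        calc |x ^ (γ - 1) - y ^ (γ - 1)| * |g y|
            ≤ (|γ - 1| * (y ^ (γ - 2) + x ^ (γ - 2)) * (x - y)) * (L * y ^ β) := by
              exact mul_le_mul hmvt hgy (abs_nonneg _)
                (mul_nonneg (mul_nonneg (abs_nonneg _)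
                  (add_nonneg (Real.rpow_nonneg hypos.le _) (Real.rpow_nonneg hxpos.le _)))
                  hdpos.le)
          _ ≤ (|γ - 1| * (2 * y ^ (γ - 2) + h ^ (γ - 2)) * (x - y)) * (L * y ^ β) := by
              apply mul_le_mul_of_nonneg_right _ hgy0
              apply mul_le_mul_of_nonneg_right _ hdpos.le
              apply mul_le_mul_of_nonneg_left _ (abs_nonneg _)
              linarith
          _ = 2 * |γ - 1| * L * (y ^ (γ - 2) * y ^ β * (x - y))
              + |γ - 1| * L * (h ^ (γ - 2) * y ^ β * (x - y)) := by ring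
          _ ≤ 2 * |γ - 1| * L * (M * (x - y) ^ θ)
              + |γ - 1| * L * (N * (x - y) ^ θ) := by
              apply add_le_add
              · exact mul_le_mul_of_nonneg_left partA
                  (mul_nonneg (mul_nonneg (by norm_num) (abs_nonneg _)) hL)
              · exact mul_le_mul_of_nonneg_left partB (mul_nonneg (abs_nonneg _) hL)
          _ ≤ 2 * |γ - 1| * L * (M * (x - y) ^ θ)
              + 2 * |γ - 1| * L * (N * (x - y) ^ θ) := by
              have h0 : 0 ≤ |γ - 1| * L * (N * (x - y) ^ θ) :=
                mul_nonneg (mul_nonneg (abs_nonneg _) hL) (mul_nonneg hN0 hdθ0)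
              linarith [h0]
          _ = (2 * |γ - 1| * M + 2 * |γ - 1| * N) * L * (x - y) ^ θ := by ring
      calc |x ^ (γ - 1) * g x - y ^ (γ - 1) * g y|
          = |x ^ (γ - 1) * (g x - g y) + (x ^ (γ - 1) - y ^ (γ - 1)) * g y| := by
            congr 1
            ring
        _ ≤ |x ^ (γ - 1) * (g x - g y)| + |(x ^ (γ - 1) - y ^ (γ - 1)) * g y| :=
            abs_add_le _ _
        _ = x ^ (γ - 1) * |g x - g y| + |x ^ (γ - 1) - y ^ (γ - 1)| * |g y| := by
            rw [abs_mul, abs_mul, abs_of_nonneg (Real.rpow_nonneg hxpos.le _)]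
        _ ≤ M * L * (x - y) ^ θ
            + (2 * |γ - 1| * M + 2 * |γ - 1| * N) * L * (x - y) ^ θ := add_le_add t1 t2
        _ = (M + 2 * |γ - 1| * M + 2 * |γ - 1| * N) * L * (x - y) ^ θ := by ring
        _ ≤ C * L * (x - y) ^ θ :=
            mul_le_mul_of_nonneg_right (mul_le_mul_of_nonneg_right hCsub2 hL) hdθ0
  -- symmetrized estimate
  have key' : ∀ x ∈ Set.Icc (0 : ℝ) h, ∀ y ∈ Set.Icc (0 : ℝ) h,
      |x ^ (γ - 1) * g x - y ^ (γ - 1) * g y| ≤ C * L * |x - y| ^ θ := by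
    intro x hx y hy
    rcases le_total y x with hxy | hxy
    · rw [abs_of_nonneg (sub_nonneg.2 hxy)]; exact key x hx y hy hxy
    · rw [abs_sub_comm x y, abs_sub_comm (x ^ (γ - 1) * g x),
        abs_of_nonneg (sub_nonneg.2 hxy)]
      exact key y hy x hx hxy
  constructor
  · -- continuity from the Hölder estimate
    intro x hx
    have htend0 : Filter.Tendsto (fun y : ℝ => C * L * |y - x| ^ θ)
        (nhdsWithin x (Set.Icc 0 h)) (nhds 0) := by
      have h1 : ContinuousAt (fun t : ℝ => t ^ θ) 0 :=
        Real.continuousAt_rpow_const 0 θ (Or.inr hθpos.le)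
      have h2 : Filter.Tendsto (fun y : ℝ => |y - x|) (nhdsWithin x (Set.Icc 0 h))
          (nhds 0) := by
        have hc : Continuous (fun y : ℝ => |y - x|) :=
          (continuous_id.sub continuous_const).abs
        have h4 := hc.tendsto x
        simp only [sub_self, abs_zero] at h4
        exact h4.mono_left nhdsWithin_le_nhds
      have h3 := (h1.tendsto.comp h2)
      rw [Real.zero_rpow hθpos.ne'] at h3
      have := h3.const_mul (C * L)
      simpa using this
    have hev : ∀ᶠ y in nhdsWithin x (Set.Icc 0 h),
        ‖(fun y : ℝ => y ^ (γ - 1) * g y) y - x ^ (γ - 1) * g x‖ ≤ C * L * |y - x| ^ θ := by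
      filter_upwards [self_mem_nhdsWithin] with y hy
      rw [Real.norm_eq_abs]
      exact key' y hy x hx
    have := squeeze_zero_norm' hev htend0
    rw [ContinuousWithinAt]
    exact tendsto_sub_nhds_zero_iff.mp this
  · exact key'
end

section
/- Let 0 < α < 1, h > 0, m a positive integer, and g ∈ C^m[0,h] with g^(j)(0) = 0 for 0 ≤ j ≤ m. Define w(x) := ∫₀ˣ (x-t)^(α-1) g(t) dt. Then w ∈ C^m[0,h], w^(i)(x) = ∫₀ˣ (x-t)^(α-1) g^(i)(t) dt for 1 ≤ i ≤ m, w^(j)(0) = 0 for 0 ≤ j ≤ m, and ‖w'‖_{C^{m-1}[0,h]} ≤ C h^α ‖g'‖_{C^{m-1}[0,h]} for a constant C depending only on α. -/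
/-!
Substituting `s = x - t` and extending `φ` by zero to the left of `0` (and constantly to the
right of `h`) gives `∫₀ˣ (x - t)^(α-1) φ t dt = ∫₀ʰ s^(α-1) φ̃ (x - s) ds`, whose limits no
longer depend on `x`. When `f 0 = 0` the extension `f̃` is Lipschitz with constant `sup |f'|`,
so one may differentiate under the integral sign with the integrable dominating function
`s^(α-1) sup |f'|`; the kink of `f̃` at `0` only matters at the single point `s = x`. Hence
`(I^α f)' = I^α f'`, and iterating gives the formula for all derivatives up to order `m`.
The estimate comes from `∫₀ˣ s^(α-1) ds = x^α / α`, so `C = 1 / α` works.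
-/

open Real MeasureTheory intervalIntegral Set Filter Topology
open scoped Interval

noncomputable def riemannLiouville (α : ℝ) (φ : ℝ → ℝ) (x : ℝ) : ℝ :=
  ∫ t in (0 : ℝ)..x, (x - t) ^ (α - 1) * φ t

noncomputable def zeroExtend (h : ℝ) (φ : ℝ → ℝ) : ℝ → ℝ :=
  (Ici 0).indicator fun t => φ (max 0 (min t h))

section zeroExtend

variable {h : ℝ} {φ : ℝ → ℝ}

lemma zeroExtend_of_mem {t : ℝ} (ht : t ∈ Icc 0 h) : zeroExtend h φ t = φ t := by
  rw [zeroExtend, indicator_of_mem (show t ∈ Ici 0 from ht.1), min_eq_left ht.2,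
    max_eq_right ht.1]

lemma zeroExtend_of_neg {t : ℝ} (ht : t < 0) : zeroExtend h φ t = 0 :=
  indicator_of_notMem (not_le.2 ht) _

lemma zeroExtend_eq_comp_clamp (hφ0 : φ 0 = 0) :
    zeroExtend h φ = fun t => φ (max 0 (min t h)) := by
  ext t
  rcases lt_or_ge t 0 with ht | ht
  · rw [zeroExtend_of_neg ht, max_eq_left (min_le_of_left_le ht.le), hφ0]
  · rw [zeroExtend, indicator_of_mem (show t ∈ Ici 0 from ht)]

lemma max_zero_min_mem_Icc (hh : 0 ≤ h) (t : ℝ) : max 0 (min t h) ∈ Icc 0 h :=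
  ⟨le_max_left _ _, max_le hh (min_le_right _ _)⟩

lemma measurable_zeroExtend (hh : 0 ≤ h) (hφ : ContinuousOn φ (Icc 0 h)) :
    Measurable (zeroExtend h φ) :=
  (hφ.comp_continuous (by fun_prop) (max_zero_min_mem_Icc hh)).measurable.indicator
    measurableSet_Ici

lemma continuous_zeroExtend (hh : 0 ≤ h) (hφ : ContinuousOn φ (Icc 0 h)) (hφ0 : φ 0 = 0) :
    Continuous (zeroExtend h φ) := by
  rw [zeroExtend_eq_comp_clamp hφ0]
  exact hφ.comp_continuous (by fun_prop) (max_zero_min_mem_Icc hh)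

lemma lipschitzWith_zeroExtend {C : NNReal} (hh : 0 ≤ h) (hφ : LipschitzOnWith C φ (Icc 0 h))
    (hφ0 : φ 0 = 0) : LipschitzWith C (zeroExtend h φ) := by
  have hclamp : LipschitzWith 1 fun t : ℝ => max 0 (min t h) :=
    (LipschitzWith.id.min_const h).const_max 0
  rw [zeroExtend_eq_comp_clamp hφ0, ← lipschitzOnWith_univ, ← mul_one C]
  exact hφ.comp hclamp.lipschitzOnWith fun t _ => max_zero_min_mem_Icc hh t

lemma abs_zeroExtend_le (hh : 0 ≤ h) {B : ℝ} (hB : ∀ t ∈ Icc 0 h, |φ t| ≤ B) (t : ℝ) :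
    |zeroExtend h φ t| ≤ B := by
  rw [zeroExtend]
  by_cases ht : t ∈ Ici 0
  · rw [indicator_of_mem ht]
    exact hB _ (max_zero_min_mem_Icc hh t)
  · rw [indicator_of_notMem ht, abs_zero]
    exact (abs_nonneg _).trans (hB 0 ⟨le_rfl, hh⟩)

lemma hasDerivAt_zeroExtend {φ' : ℝ → ℝ}
    (hφ : ∀ t ∈ Icc 0 h, HasDerivWithinAt φ (φ' t) (Icc 0 h) t)
    {p : ℝ} (hp0 : p ≠ 0) (hph : p < h) :
    HasDerivAt (zeroExtend h φ) (zeroExtend h φ' p) p := by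
  rcases hp0.lt_or_gt with hp | hp
  · rw [zeroExtend_of_neg hp]
    refine (hasDerivAt_const p 0).congr_of_eventuallyEq ?_
    filter_upwards [Iio_mem_nhds hp] with t ht using zeroExtend_of_neg ht
  · have hmem : Icc 0 h ∈ 𝓝 p := Icc_mem_nhds hp hph
    rw [zeroExtend_of_mem ⟨hp.le, hph.le⟩]
    refine ((hφ p ⟨hp.le, hph.le⟩).hasDerivAt hmem).congr_of_eventuallyEq ?_
    filter_upwards [hmem] with t ht using zeroExtend_of_mem ht

end zeroExtend

section riemannLiouville

variable {α h : ℝ} {φ : ℝ → ℝ}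

lemma riemannLiouville_eq_integral_rpow_mul (x : ℝ) :
    riemannLiouville α φ x = ∫ s in (0 : ℝ)..x, s ^ (α - 1) * φ (x - s) := by
  simpa [riemannLiouville] using
    integral_comp_sub_left (a := 0) (b := x) (fun s => s ^ (α - 1) * φ (x - s)) x

lemma integral_rpow_sub_one (hα : 0 < α) (x : ℝ) :
    ∫ s in (0 : ℝ)..x, s ^ (α - 1) = x ^ α / α := by
  rw [integral_rpow (Or.inl (by linarith)), sub_add_cancel, zero_rpow hα.ne', sub_zero]

lemma intervalIntegrable_rpow_sub_one (hα : 0 < α) (x : ℝ) :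
    IntervalIntegrable (fun s : ℝ => s ^ (α - 1)) volume 0 x :=
  intervalIntegrable_rpow' (by linarith)

lemma abs_riemannLiouville_le (hα : 0 < α) {B x : ℝ} (hx : 0 ≤ x)
    (hB : ∀ t ∈ Icc 0 x, |φ t| ≤ B) :
    |riemannLiouville α φ x| ≤ B * x ^ α / α := by
  rw [riemannLiouville_eq_integral_rpow_mul, ← norm_eq_abs, mul_div_assoc,
    ← integral_rpow_sub_one hα, ← intervalIntegral.integral_const_mul]
  refine norm_integral_le_of_norm_le hx (ae_of_all _ fun s hs => ?_)
    ((intervalIntegrable_rpow_sub_one hα x).const_mul B)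
  have hs0 : 0 ≤ s ^ (α - 1) := rpow_nonneg hs.1.le _
  rw [norm_mul, norm_of_nonneg hs0, mul_comm B]
  exact mul_le_mul_of_nonneg_left (hB _ ⟨by linarith [hs.2], by linarith [hs.1]⟩) hs0

lemma riemannLiouville_eq_integral_zeroExtend (hα : 0 < α) (hφ : ContinuousOn φ (Icc 0 h))
    {x : ℝ} (hx : x ∈ Icc 0 h) :
    riemannLiouville α φ x = ∫ s in (0 : ℝ)..h, s ^ (α - 1) * zeroExtend h φ (x - s) := by
  set F := fun s => s ^ (α - 1) * zeroExtend h φ (x - s)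
  have hleft : EqOn (fun s => s ^ (α - 1) * φ (x - s)) F (Ι 0 x) := fun s hs => by
    rw [uIoc_of_le hx.1] at hs
    have hxs : x - s ∈ Icc 0 h := ⟨by linarith [hs.2], by linarith [hs.1, hx.2]⟩
    simp only [F, zeroExtend_of_mem hxs]
  have hright : EqOn 0 F (Ι x h) := fun s hs => by
    rw [uIoc_of_le hx.2] at hs
    simp only [F, Pi.zero_apply, zeroExtend_of_neg (by linarith [hs.1] : x - s < 0), mul_zero]
  have hint_left : IntervalIntegrable F volume 0 x := by
    refine ((intervalIntegrable_rpow_sub_one hα x).mul_continuousOn ?_).congr hleft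
    refine hφ.comp (by fun_prop) fun s hs => ?_
    rw [uIcc_of_le hx.1] at hs
    exact ⟨by linarith [hs.2], by linarith [hs.1, hx.2]⟩
  have hint_right : IntervalIntegrable F volume x h := intervalIntegrable_const.congr hright
  rw [← integral_add_adjacent_intervals hint_left hint_right,
    riemannLiouville_eq_integral_rpow_mul,
    integral_congr_ae (ae_of_all _ hleft), ← integral_congr_ae (ae_of_all _ hright)]
  simp

lemma continuousOn_riemannLiouville (hα : 0 < α) (hφ : ContinuousOn φ (Icc 0 h))
    (hφ0 : φ 0 = 0) :
    ContinuousOn (riemannLiouville α φ) (Icc 0 h) := by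
  intro x hx
  have hh : 0 ≤ h := hx.1.trans hx.2
  obtain ⟨B, hB⟩ := isCompact_Icc.exists_bound_of_continuousOn hφ
  have hψ := continuous_zeroExtend hh hφ hφ0
  have hcont :
      Continuous fun y => ∫ s in (0 : ℝ)..h, s ^ (α - 1) * zeroExtend h φ (y - s) := by
    refine continuous_of_dominated_interval (bound := fun s => s ^ (α - 1) * B)
      (fun y => (Measurable.aestronglyMeasurable (by fun_prop)))
      (fun y => ae_of_all _ fun s hs => ?_) ((intervalIntegrable_rpow_sub_one hα h).mul_const B)
      (ae_of_all _ fun s _ => by fun_prop)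
    rw [uIoc_of_le hh] at hs
    have hs0 : 0 ≤ s ^ (α - 1) := rpow_nonneg hs.1.le _
    rw [norm_mul, norm_of_nonneg hs0]
    exact mul_le_mul_of_nonneg_left (abs_zeroExtend_le hh hB _) hs0
  exact hcont.continuousWithinAt.congr
    (fun y hy => riemannLiouville_eq_integral_zeroExtend hα hφ hy)
    (riemannLiouville_eq_integral_zeroExtend hα hφ hx)

lemma hasDerivWithinAt_riemannLiouville (hα : 0 < α) {f f' : ℝ → ℝ}
    (hf : ∀ t ∈ Icc 0 h, HasDerivWithinAt f (f' t) (Icc 0 h) t)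
    (hf' : ContinuousOn f' (Icc 0 h)) (hf0 : f 0 = 0) {x : ℝ} (hx : x ∈ Icc 0 h) :
    HasDerivWithinAt (riemannLiouville α f) (riemannLiouville α f' x) (Icc 0 h) x := by
  have hh : 0 ≤ h := hx.1.trans hx.2
  have hfc : ContinuousOn f (Icc 0 h) := fun t ht => (hf t ht).continuousWithinAt
  obtain ⟨C, hC⟩ := isCompact_Icc.exists_bound_of_continuousOn hf'
  have hC0 : 0 ≤ C := (norm_nonneg _).trans (hC 0 ⟨le_rfl, hh⟩)
  have hlip : LipschitzWith C.toNNReal (zeroExtend h f) :=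
    lipschitzWith_zeroExtend hh ((convex_Icc 0 h).lipschitzOnWith_of_nnnorm_hasDerivWithin_le hf
      fun t ht => by rw [← NNReal.coe_le_coe, coe_nnnorm, coe_toNNReal _ hC0]; exact hC t ht) hf0
  have hψ : Continuous (zeroExtend h f) := hlip.continuous
  have hψ' : Measurable (zeroExtend h f') := measurable_zeroExtend hh hf'
  have hlip_param : ∀ s ∈ Ι 0 h, LipschitzOnWith (nnabs (s ^ (α - 1) * C))
      (fun y => s ^ (α - 1) * zeroExtend h f (y - s)) univ := fun s hs => by
    rw [uIoc_of_le hh] at hs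
    have hs0 : 0 ≤ s ^ (α - 1) := rpow_nonneg hs.1.le _
    refine LipschitzOnWith.of_dist_le_mul fun y _ z _ => ?_
    rw [dist_eq_norm, ← mul_sub, norm_mul, norm_of_nonneg hs0, coe_nnabs,
      abs_of_nonneg (by positivity), mul_assoc]
    refine mul_le_mul_of_nonneg_left ?_ hs0
    simpa [coe_toNNReal _ hC0, dist_eq_norm] using hlip.dist_le_mul (y - s) (z - s)
  have hderiv_param : ∀ᵐ s, s ∈ Ι 0 h →
      HasDerivAt (fun y => s ^ (α - 1) * zeroExtend h f (y - s))
        (s ^ (α - 1) * zeroExtend h f' (x - s)) x := by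
    filter_upwards [volume.ae_ne x] with s hsx hs
    rw [uIoc_of_le hh] at hs
    exact ((hasDerivAt_zeroExtend hf (sub_ne_zero.2 hsx.symm)
      (by linarith [hs.1, hx.2])).comp_sub_const x s).const_mul _
  have hG := (hasDerivAt_integral_of_dominated_loc_of_lip (bound := fun s => s ^ (α - 1) * C)
    univ_mem (Eventually.of_forall fun y => (Measurable.aestronglyMeasurable (by fun_prop)))
    ((intervalIntegrable_rpow_sub_one hα h).mul_continuousOn (by fun_prop))
    (Measurable.aestronglyMeasurable (by fun_prop)) (ae_of_all _ hlip_param)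
    ((intervalIntegrable_rpow_sub_one hα h).mul_const C) hderiv_param).2
  rw [← riemannLiouville_eq_integral_zeroExtend hα hf' hx] at hG
  exact hG.hasDerivWithinAt.congr (fun y hy => riemannLiouville_eq_integral_zeroExtend hα hfc hy)
    (riemannLiouville_eq_integral_zeroExtend hα hfc hx)

end riemannLiouville

lemma ContDiffOn.hasDerivWithinAt_iteratedDerivWithin {s : Set ℝ} {m i : ℕ} {g : ℝ → ℝ}
    (hg : ContDiffOn ℝ m g s) (hs : UniqueDiffOn ℝ s) (hi : i < m) {x : ℝ} (hx : x ∈ s) :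
    HasDerivWithinAt (iteratedDerivWithin i g s) (iteratedDerivWithin (i + 1) g s x) s x := by
  rw [iteratedDerivWithin_succ]
  exact (hg.differentiableOn_iteratedDerivWithin (by exact_mod_cast hi) hs x hx).hasDerivWithinAt

section iteratedDerivWithin

variable {α h : ℝ} {m : ℕ} {g : ℝ → ℝ}

lemma hasDerivWithinAt_riemannLiouville_iteratedDerivWithin (hα : 0 < α) (hh : 0 < h)
    (hg : ContDiffOn ℝ m g (Icc 0 h)) {i : ℕ} (hi : i < m)
    (hgi : iteratedDerivWithin i g (Icc 0 h) 0 = 0) {x : ℝ} (hx : x ∈ Icc 0 h) :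
    HasDerivWithinAt (riemannLiouville α (iteratedDerivWithin i g (Icc 0 h)))
      (riemannLiouville α (iteratedDerivWithin (i + 1) g (Icc 0 h)) x) (Icc 0 h) x :=
  hasDerivWithinAt_riemannLiouville hα
    (fun _ ht => hg.hasDerivWithinAt_iteratedDerivWithin (uniqueDiffOn_Icc hh) hi ht)
    (hg.continuousOn_iteratedDerivWithin (by exact_mod_cast hi) (uniqueDiffOn_Icc hh)) hgi hx

lemma iteratedDerivWithin_riemannLiouville (hα : 0 < α) (hh : 0 < h)
    (hg : ContDiffOn ℝ m g (Icc 0 h)) (hg0 : ∀ j < m, iteratedDerivWithin j g (Icc 0 h) 0 = 0) :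
    ∀ i ≤ m, EqOn (iteratedDerivWithin i (riemannLiouville α g) (Icc 0 h))
      (riemannLiouville α (iteratedDerivWithin i g (Icc 0 h))) (Icc 0 h)
  | 0, _ => fun x _ => by simp only [iteratedDerivWithin_zero]
  | i + 1, hi => fun x hx => by
    have ih := iteratedDerivWithin_riemannLiouville hα hh hg hg0 i (by omega)
    rw [iteratedDerivWithin_succ, derivWithin_congr ih (ih hx)]
    exact (hasDerivWithinAt_riemannLiouville_iteratedDerivWithin hα hh hg (by omega)
      (hg0 i (by omega)) hx).derivWithin (uniqueDiffOn_Icc hh x hx)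

lemma contDiffOn_riemannLiouville (hα : 0 < α) (hh : 0 < h) (hg : ContDiffOn ℝ m g (Icc 0 h))
    (hg0 : ∀ j ≤ m, iteratedDerivWithin j g (Icc 0 h) 0 = 0) :
    ContDiffOn ℝ m (riemannLiouville α g) (Icc 0 h) := by
  have hiter := iteratedDerivWithin_riemannLiouville hα hh hg fun j hj => hg0 j hj.le
  refine (contDiffOn_nat_iff_continuousOn_differentiableOn_deriv (uniqueDiffOn_Icc hh)).2
    ⟨fun i hi => ?_, fun i hi x hx => ?_⟩
  · exact (continuousOn_riemannLiouville hα (hg.continuousOn_iteratedDerivWithin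
      (by exact_mod_cast hi) (uniqueDiffOn_Icc hh)) (hg0 i hi)).congr (hiter i hi)
  · exact (hasDerivWithinAt_riemannLiouville_iteratedDerivWithin hα hh hg hi (hg0 i hi.le)
      hx).differentiableWithinAt.congr (hiter i hi.le) (hiter i hi.le hx)

end iteratedDerivWithin

theorem stmt10_general (α : ℝ) (hα0 : 0 < α) :
    ∃ C > 0, ∀ (h : ℝ) (m : ℕ) (g : ℝ → ℝ) (M : ℝ),
      0 < h → 1 ≤ m →
      ContDiffOn ℝ m g (Set.Icc 0 h) →
      (∀ j ≤ m, iteratedDerivWithin j g (Set.Icc 0 h) 0 = 0) →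
      (∀ i : ℕ, 1 ≤ i → i ≤ m → ∀ x ∈ Set.Icc (0 : ℝ) h,
        |iteratedDerivWithin i g (Set.Icc 0 h) x| ≤ M) →
      ContDiffOn ℝ m (fun x : ℝ => ∫ t in (0 : ℝ)..x, (x - t) ^ (α - 1) * g t)
          (Set.Icc 0 h) ∧
      (∀ i : ℕ, 1 ≤ i → i ≤ m → ∀ x ∈ Set.Icc (0 : ℝ) h,
        iteratedDerivWithin i (fun x : ℝ => ∫ t in (0 : ℝ)..x, (x - t) ^ (α - 1) * g t)
            (Set.Icc 0 h) x =
          ∫ t in (0 : ℝ)..x, (x - t) ^ (α - 1) * iteratedDerivWithin i g (Set.Icc 0 h) t) ∧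
      (∀ j ≤ m, iteratedDerivWithin j
          (fun x : ℝ => ∫ t in (0 : ℝ)..x, (x - t) ^ (α - 1) * g t) (Set.Icc 0 h) 0 = 0) ∧
      (∀ i : ℕ, 1 ≤ i → i ≤ m → ∀ x ∈ Set.Icc (0 : ℝ) h,
        |iteratedDerivWithin i (fun x : ℝ => ∫ t in (0 : ℝ)..x, (x - t) ^ (α - 1) * g t)
            (Set.Icc 0 h) x| ≤ C * h ^ α * M) := by
  refine ⟨1 / α, by positivity, fun h m g M hh _ hg hg0 hM => ?_⟩
  rw [show (fun x : ℝ => ∫ t in (0 : ℝ)..x, (x - t) ^ (α - 1) * g t) = riemannLiouville α g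
    from rfl]
  have hiter := iteratedDerivWithin_riemannLiouville hα0 hh hg fun j hj => hg0 j hj.le
  refine ⟨contDiffOn_riemannLiouville hα0 hh hg hg0, fun i _ hi x hx => hiter i hi hx,
    fun j hj => ?_, fun i hi1 hi x hx => ?_⟩
  · rw [hiter j hj ⟨le_rfl, hh.le⟩]
    simp [riemannLiouville]
  · have hM0 : 0 ≤ M := (abs_nonneg _).trans (hM i hi1 hi x hx)
    rw [hiter i hi hx]
    calc |riemannLiouville α (iteratedDerivWithin i g (Icc 0 h)) x|
        ≤ M * x ^ α / α := abs_riemannLiouville_le hα0 hx.1 fun t ht =>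
          hM i hi1 hi t ⟨ht.1, ht.2.trans hx.2⟩
      _ ≤ M * h ^ α / α := by gcongr; exacts [hx.1, hx.2]
      _ = 1 / α * h ^ α * M := by ring

theorem stmt10 (α : ℝ) (hα0 : 0 < α) (hα1 : α < 1) :
    ∃ C > 0, ∀ (h : ℝ) (m : ℕ) (g : ℝ → ℝ) (M : ℝ),
      0 < h → 1 ≤ m →
      ContDiffOn ℝ m g (Set.Icc 0 h) →
      (∀ j ≤ m, iteratedDerivWithin j g (Set.Icc 0 h) 0 = 0) →
      (∀ i : ℕ, 1 ≤ i → i ≤ m → ∀ x ∈ Set.Icc (0 : ℝ) h,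
        |iteratedDerivWithin i g (Set.Icc 0 h) x| ≤ M) →
      ContDiffOn ℝ m (fun x : ℝ => ∫ t in (0 : ℝ)..x, (x - t) ^ (α - 1) * g t)
          (Set.Icc 0 h) ∧
      (∀ i : ℕ, 1 ≤ i → i ≤ m → ∀ x ∈ Set.Icc (0 : ℝ) h,
        iteratedDerivWithin i (fun x : ℝ => ∫ t in (0 : ℝ)..x, (x - t) ^ (α - 1) * g t)
            (Set.Icc 0 h) x =
          ∫ t in (0 : ℝ)..x, (x - t) ^ (α - 1) * iteratedDerivWithin i g (Set.Icc 0 h) t) ∧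
      (∀ j ≤ m, iteratedDerivWithin j
          (fun x : ℝ => ∫ t in (0 : ℝ)..x, (x - t) ^ (α - 1) * g t) (Set.Icc 0 h) 0 = 0) ∧
      (∀ i : ℕ, 1 ≤ i → i ≤ m → ∀ x ∈ Set.Icc (0 : ℝ) h,
        |iteratedDerivWithin i (fun x : ℝ => ∫ t in (0 : ℝ)..x, (x - t) ^ (α - 1) * g t)
            (Set.Icc 0 h) x| ≤ C * h ^ α * M) :=
  stmt10_general α hα0
end
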